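/- arXiv:2207.08437 — 8 statements merged into one kernel-verified Lean document; each statement's English description precedes it below -/
import Mathlib

section
/- Let L ≥ 2 be an integer, A ∈ ℝ^{M×N}, y ∈ ℝ^M, and let x₀ ∈ ℝ^N have all entries strictly positive. Suppose x : [0,∞) → ℝ^N is differentiable and satisfies the reduced gradient flow x'(t) = −[Aᵀ(A x(t)^{⊙L} − y)] ⊙ x(t)^{⊙(L−1)} for all t ≥ 0, with x(0) = x₀. Let x₊ ∈ S₊ and y₊ := A x₊. Then there exists a constant C > 0 (depending only on A, y and x₀) such that ‖A x(t)^{⊙L} − y₊‖₂² ≤ C/t for every t > 0. -/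
/-!
Write `w = x^{⊙L}`, `F(t) = ‖A w(t) − y‖²` and `F₊ = ‖A x₊ − y‖²`. Each coordinate of `x` solves
a linear ODE `u' = φ(t) u`, so it stays positive, and `F' = −2L ∑ (gᵢ xᵢ^{L−1})² ≤ 0` for the
gradient `g = Aᵀ(A w − y)`. Choosing `h` with `h'(a) = a^{−(L−1)}`, the mirror potential
`D = 2 ∑ (xᵢ²/2 − x₊ᵢ h(xᵢ))` satisfies `D' = −2⟨g, w − x₊⟩ = −(F − F₊) − ‖A w − A x₊‖²`, hence
`t (F − F₊) + D` is nonincreasing; `D` is bounded below since `h(a) ≤ a`. Finally the variational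
inequality of the NNLS minimiser gives `‖A w − A x₊‖² ≤ F − F₊`.
-/

open Filter Topology Matrix

noncomputable section

/-- The NNLS solution set `S₊ = argmin_{z ≥ 0} ‖Az − y‖₂²`. -/
def nnlsSet {M N : ℕ} (A : Matrix (Fin M) (Fin N) ℝ) (y : Fin M → ℝ) :
    Set (Fin N → ℝ) :=
  {z | (∀ i, 0 ≤ z i) ∧ ∀ w : Fin N → ℝ, (∀ i, 0 ≤ w i) →
    ∑ j, (A.mulVec z j - y j) ^ 2 ≤ ∑ j, (A.mulVec w j - y j) ^ 2}

/-- The reduced gradient flow `x'(t) = −[Aᵀ(A x(t)^{⊙L} − y)] ⊙ x(t)^{⊙(L−1)}` for `t ≥ 0`. -/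
def GradFlow {M N : ℕ} (A : Matrix (Fin M) (Fin N) ℝ) (y : Fin M → ℝ) (L : ℕ)
    (x : ℝ → Fin N → ℝ) : Prop :=
  ∀ t : ℝ, 0 ≤ t → ∀ i : Fin N,
    HasDerivAt (fun s => x s i)
      (-(Matrix.mulVec Aᵀ (A.mulVec (fun j => x t j ^ L) - y) i * x t i ^ (L - 1))) t

open Set

theorem pos_of_hasDerivAt_mul_self {u φ : ℝ → ℝ} (hφ : ContinuousOn φ (Ici 0))
    (hu : ∀ t, 0 ≤ t → HasDerivAt u (φ t * u t) t) (h0 : 0 < u 0) {t : ℝ} (ht : 0 ≤ t) :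
    0 < u t := by
  by_contra! hneg
  have hcont : ContinuousOn u (Icc 0 t) := fun s hs =>
    (hu s hs.1).continuousAt.continuousWithinAt
  obtain ⟨s, hs, hus⟩ := intermediate_value_Icc' ht hcont ⟨hneg, h0.le⟩
  obtain ⟨K, hK⟩ := (isCompact_Icc.image_of_continuousOn
    ((hφ.mono Icc_subset_Ici_self).nnnorm)).bddAbove
  -- `u` vanishes at time `s`, so uniqueness for `v' = φ v` forces `u = 0` on `[0, s]`
  have huniq := ODE_solution_unique_of_mem_Icc_left (v := fun t z => φ t * z)
    (s := fun _ => univ) (K := K) (f := u) (g := fun _ => 0) (a := 0) (b := s)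
    (fun τ hτ => ((lipschitzWith_smul (φ τ)).weaken
      (hK ⟨τ, ⟨hτ.1.le, hτ.2.trans hs.2⟩, rfl⟩)).lipschitzOnWith)
    (hcont.mono (Icc_subset_Icc_right hs.2))
    (fun τ hτ => (hu τ hτ.1.le).hasDerivWithinAt) (fun _ _ => mem_univ _)
    continuousOn_const (fun τ _ => by simpa using hasDerivWithinAt_const τ _ (0 : ℝ))
    (fun _ _ => mem_univ _) hus
  exact h0.ne' (huniq ⟨le_rfl, hs.1⟩)

theorem mul_sub_le_sub_of_hasDerivAt {F D F' D' : ℝ → ℝ} {c : ℝ}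
    (hF : ∀ t, 0 ≤ t → HasDerivAt F (F' t) t) (hD : ∀ t, 0 ≤ t → HasDerivAt D (D' t) t)
    (hF' : ∀ t, 0 ≤ t → F' t ≤ 0) (hD' : ∀ t, 0 ≤ t → D' t ≤ c - F t) {t : ℝ} (ht : 0 ≤ t) :
    t * (F t - c) ≤ D 0 - D t := by
  have hV : ∀ s, 0 ≤ s → HasDerivAt (fun s => s * (F s - c) + D s)
      (1 * (F s - c) + s * F' s + D' s) s := fun s hs =>
    ((hasDerivAt_id s).mul ((hF s hs).sub_const c)).add (hD s hs)
  have hanti : AntitoneOn (fun s => s * (F s - c) + D s) (Ici 0) := by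
    refine antitoneOn_of_hasDerivWithinAt_nonpos
      (f' := fun s => 1 * (F s - c) + s * F' s + D' s) (convex_Ici 0)
      (fun s hs => (hV s hs).continuousAt.continuousWithinAt) (fun s hs => ?_) (fun s hs => ?_)
    · rw [interior_Ici] at hs
      exact (hV s (le_of_lt hs)).hasDerivWithinAt
    · rw [interior_Ici] at hs
      nlinarith [hF' s hs.le, hD' s hs.le, mem_Ioi.mp hs]
  have hmono := hanti self_mem_Ici ht ht
  simp only [zero_mul, zero_add] at hmono
  linarith

theorem nonneg_of_forall_nonneg_mul_add_sq_mul {b c : ℝ}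
    (h : ∀ θ ∈ Ioc (0 : ℝ) 1, 0 ≤ θ * b + θ ^ 2 * c) : 0 ≤ b := by
  have hlim : Tendsto (fun θ : ℝ => b + θ * c) (𝓝[>] 0) (𝓝 b) := by
    have : Continuous fun θ : ℝ => b + θ * c := by fun_prop
    simpa using (this.tendsto 0).mono_left nhdsWithin_le_nhds
  refine ge_of_tendsto hlim ?_
  filter_upwards [Ioc_mem_nhdsGT one_pos] with θ hθ
  nlinarith [h θ hθ, hθ.1]

theorem exists_hasDerivAt_inv_pow_le_self (L : ℕ) (hL : 2 ≤ L) :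
    ∃ h : ℝ → ℝ, ∀ a, 0 < a → HasDerivAt h (a ^ (L - 1))⁻¹ a ∧ h a ≤ a := by
  obtain ⟨n, rfl⟩ : ∃ n, L = n + 2 := ⟨L - 2, by omega⟩
  rcases n.eq_zero_or_pos with rfl | hn
  · exact ⟨Real.log, fun a ha => ⟨by simpa using Real.hasDerivAt_log ha.ne',
      (Real.log_le_sub_one_of_pos ha).trans (by linarith)⟩⟩
  · refine ⟨fun a => -(a ^ (-(n : ℤ))) / n, fun a ha => ⟨?_, ?_⟩⟩
    · refine ((hasDerivAt_zpow (-(n : ℤ)) a (Or.inl ha.ne')).fun_neg.div_const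
        (n : ℝ)).congr_deriv ?_
      rw [show -(n : ℤ) - 1 = -((n + 1 : ℕ) : ℤ) by push_cast; ring, _root_.zpow_neg, zpow_natCast]
      push_cast
      field_simp
    · have hzpow : 0 < a ^ (-(n : ℤ)) := zpow_pos ha _
      calc -(a ^ (-(n : ℤ))) / n ≤ 0 := div_nonpos_of_nonpos_of_nonneg (by linarith) n.cast_nonneg
        _ ≤ a := ha.le

theorem hasDerivAt_sq_div_two_sub_mul_comp {u h : ℝ → ℝ} {g p t : ℝ} {L : ℕ} (hL : L ≠ 0)
    (hpos : 0 < u t) (hh : HasDerivAt h (u t ^ (L - 1))⁻¹ (u t))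
    (hu : HasDerivAt u (-(g * u t ^ (L - 1))) t) :
    HasDerivAt (fun s => u s ^ 2 / 2 - p * h (u s)) (-(g * (u t ^ L - p))) t := by
  refine (((hu.fun_pow 2).div_const 2).sub ((hh.comp t hu).const_mul p)).congr_deriv ?_
  have : u t ^ (L - 1) ≠ 0 := pow_ne_zero _ hpos.ne'
  rw [← pow_sub_one_mul hL]
  field_simp
  ring

section LeastSquares

variable {m n : Type*} [Fintype m] [Fintype n] (A : Matrix m n ℝ) (y : m → ℝ)

def lsqLoss (w : n → ℝ) : ℝ := ∑ j, ((A *ᵥ w) j - y j) ^ 2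

def lsqGrad (w : n → ℝ) : n → ℝ := Aᵀ *ᵥ (A *ᵥ w - y)

theorem lsqLoss_nonneg (w : n → ℝ) : 0 ≤ lsqLoss A y w :=
  Finset.sum_nonneg fun _ _ => sq_nonneg _

theorem lsqGrad_dotProduct (w v : n → ℝ) :
    lsqGrad A y w ⬝ᵥ v = (A *ᵥ w - y) ⬝ᵥ (A *ᵥ v) := by
  rw [lsqGrad, mulVec_transpose, dotProduct_mulVec]

theorem lsqLoss_add_smul (p d : n → ℝ) (θ : ℝ) :
    lsqLoss A y (p + θ • d) =
      lsqLoss A y p + θ * (2 * lsqGrad A y p ⬝ᵥ d) + θ ^ 2 * lsqLoss A 0 d := by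
  rw [lsqGrad_dotProduct]
  simp only [lsqLoss, dotProduct, mulVec_add, mulVec_smul, Pi.add_apply, Pi.smul_apply,
    Pi.sub_apply, Pi.zero_apply, smul_eq_mul, sub_zero, Finset.mul_sum, ← Finset.sum_add_distrib]
  exact Finset.sum_congr rfl fun _ _ => by ring

theorem two_mul_lsqGrad_dotProduct_sub (w p : n → ℝ) :
    2 * lsqGrad A y w ⬝ᵥ (w - p) = (lsqLoss A y w - lsqLoss A y p) + lsqLoss A (A *ᵥ p) w := by
  rw [lsqGrad_dotProduct]
  simp only [lsqLoss, dotProduct, mulVec_sub, Pi.sub_apply, Finset.mul_sum,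
    ← Finset.sum_sub_distrib, ← Finset.sum_add_distrib]
  exact Finset.sum_congr rfl fun _ _ => by ring

theorem lsqLoss_zero_sub (w p : n → ℝ) : lsqLoss A 0 (w - p) = lsqLoss A (A *ᵥ p) w := by
  simp only [lsqLoss, mulVec_sub, Pi.sub_apply, Pi.zero_apply, sub_zero]

theorem hasDerivAt_lsqLoss {w : ℝ → n → ℝ} {w' : n → ℝ} {t : ℝ}
    (hw : ∀ i, HasDerivAt (fun s => w s i) (w' i) t) :
    HasDerivAt (fun s => lsqLoss A y (w s)) (2 * lsqGrad A y (w t) ⬝ᵥ w') t := by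
  have hres : ∀ j, HasDerivAt (fun s => (A *ᵥ w s) j - y j) ((A *ᵥ w') j) t := fun j => by
    simpa only [mulVec, dotProduct] using
      (HasDerivAt.fun_sum fun i _ => (hw i).const_mul (A j i)).sub_const (y j)
  refine (HasDerivAt.fun_sum fun j _ => (hres j).fun_pow 2).congr_deriv ?_
  rw [lsqGrad_dotProduct, dotProduct, Finset.mul_sum]
  exact Finset.sum_congr rfl fun _ _ => by rw [Pi.sub_apply]; push_cast; ring
end LeastSquares

theorem nnlsSet.lsqGrad_dotProduct_nonneg {M N : ℕ} {A : Matrix (Fin M) (Fin N) ℝ}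
    {y : Fin M → ℝ} {p z : Fin N → ℝ} (hp : p ∈ nnlsSet A y) (hz : 0 ≤ z) :
    0 ≤ lsqGrad A y p ⬝ᵥ (z - p) := by
  have hquad : ∀ θ ∈ Ioc (0 : ℝ) 1,
      0 ≤ θ * (2 * lsqGrad A y p ⬝ᵥ (z - p)) + θ ^ 2 * lsqLoss A 0 (z - p) := by
    intro θ hθ
    have hmem : 0 ≤ p + θ • (z - p) := fun i => by
      have hpi : 0 ≤ p i := hp.1 i
      have hzi : 0 ≤ z i := hz i
      simp only [Pi.add_apply, Pi.smul_apply, Pi.sub_apply, smul_eq_mul, Pi.zero_apply]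
      nlinarith [hθ.1, hθ.2]
    have hmin := hp.2 _ hmem
    rw [← lsqLoss, ← lsqLoss, lsqLoss_add_smul] at hmin
    linarith
  linarith [nonneg_of_forall_nonneg_mul_add_sq_mul hquad]

theorem nnlsSet.lsqLoss_le_sub {M N : ℕ} {A : Matrix (Fin M) (Fin N) ℝ}
    {y : Fin M → ℝ} {p w : Fin N → ℝ} (hp : p ∈ nnlsSet A y) (hw : 0 ≤ w) :
    lsqLoss A (A *ᵥ p) w ≤ lsqLoss A y w - lsqLoss A y p := by
  have hexp := lsqLoss_add_smul A y p (w - p) 1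
  rw [one_smul, add_sub_cancel, one_mul, one_pow, one_mul, lsqLoss_zero_sub] at hexp
  linarith [nnlsSet.lsqGrad_dotProduct_nonneg hp hw]

section GradFlow

variable {M N L : ℕ} {A : Matrix (Fin M) (Fin N) ℝ} {y : Fin M → ℝ} {x : ℝ → Fin N → ℝ}

theorem GradFlow.pos (hflow : GradFlow A y L x) (hL : 2 ≤ L) (h0 : ∀ i, 0 < x 0 i) {t : ℝ}
    (ht : 0 ≤ t) (i : Fin N) : 0 < x t i := by
  have hx : ContinuousOn x (Ici 0) := continuousOn_pi.2 fun j s hs =>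
    (hflow s hs j).continuousAt.continuousWithinAt
  have hgrad : Continuous (lsqGrad A y) := by unfold lsqGrad; fun_prop
  refine pos_of_hasDerivAt_mul_self
    (φ := fun s => -(lsqGrad A y (fun j => x s j ^ L) i * x s i ^ (L - 2))) ?_
    (fun s hs => (hflow s hs i).congr_deriv ?_) (h0 i) ht
  · fun_prop
  · rw [show L - 1 = L - 2 + 1 by omega, pow_succ]
    simp only [lsqGrad]
    ring

theorem GradFlow.hasDerivAt_lsqLoss (hflow : GradFlow A y L x) {t : ℝ} (ht : 0 ≤ t) :
    HasDerivAt (fun s => lsqLoss A y (fun i => x s i ^ L))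
      (-(2 * L * ∑ i, (lsqGrad A y (fun i => x t i ^ L) i * x t i ^ (L - 1)) ^ 2)) t := by
  refine (_root_.hasDerivAt_lsqLoss A y fun i => (hflow t ht i).fun_pow L).congr_deriv ?_
  simp only [lsqGrad, dotProduct, Finset.mul_sum, ← Finset.sum_neg_distrib]
  exact Finset.sum_congr rfl fun _ _ => by ring

theorem GradFlow.hasDerivAt_sum_sq_div_two_sub_mul (hflow : GradFlow A y L x) (hL : L ≠ 0)
    {h : ℝ → ℝ} (hh : ∀ a, 0 < a → HasDerivAt h (a ^ (L - 1))⁻¹ a) (p : Fin N → ℝ) {t : ℝ}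
    (ht : 0 ≤ t) (hpos : ∀ i, 0 < x t i) :
    HasDerivAt (fun s => ∑ i, (x s i ^ 2 / 2 - p i * h (x s i)))
      (-(lsqGrad A y (fun i => x t i ^ L) ⬝ᵥ ((fun i => x t i ^ L) - p))) t := by
  refine (HasDerivAt.fun_sum fun i _ => hasDerivAt_sq_div_two_sub_mul_comp hL (hpos i)
    (hh _ (hpos i)) (hflow t ht i)).congr_deriv ?_
  simp [dotProduct, lsqGrad]

end GradFlow

theorem stmt1 {M N : ℕ} (L : ℕ) (hL : 2 ≤ L)
    (A : Matrix (Fin M) (Fin N) ℝ) (y : Fin M → ℝ)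
    (x : ℝ → Fin N → ℝ) (x0 : Fin N → ℝ) (hx0 : ∀ i, 0 < x0 i)
    (hinit : x 0 = x0)
    (hflow : GradFlow A y L x)
    (xp : Fin N → ℝ) (hxp : xp ∈ nnlsSet A y) :
    ∃ C : ℝ, 0 < C ∧ ∀ t : ℝ, 0 < t →
      ∑ j, (A.mulVec (fun i => x t i ^ L) j - A.mulVec xp j) ^ 2 ≤ C / t := by
  have hpos : ∀ t, 0 ≤ t → ∀ i, 0 < x t i := fun t ht => hflow.pos hL (hinit ▸ hx0) ht
  obtain ⟨h, hh⟩ := exists_hasDerivAt_inv_pow_le_self L hL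
  set w : ℝ → Fin N → ℝ := fun t i => x t i ^ L
  set D : ℝ → ℝ := fun t => 2 * ∑ i, (x t i ^ 2 / 2 - xp i * h (x t i))
  have hD_ge : ∀ t, 0 ≤ t → -∑ i, xp i ^ 2 ≤ D t := fun t ht => by
    simp only [D, Finset.mul_sum, ← Finset.sum_neg_distrib]
    refine Finset.sum_le_sum fun i _ => ?_
    nlinarith [(hh _ (hpos t ht i)).2, hxp.1 i, sq_nonneg (x t i - xp i)]
  have hrate : ∀ t, 0 ≤ t → t * (lsqLoss A y (w t) - lsqLoss A y xp) ≤ D 0 - D t :=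
    fun t => mul_sub_le_sub_of_hasDerivAt (fun t ht => hflow.hasDerivAt_lsqLoss ht)
      (fun t ht => (hflow.hasDerivAt_sum_sq_div_two_sub_mul (by omega) (fun a ha => (hh a ha).1)
        xp ht (hpos t ht)).const_mul 2)
      (fun t _ => neg_nonpos.2 (by positivity))
      (fun t _ => by
        linarith [two_mul_lsqGrad_dotProduct_sub A y (w t) xp, lsqLoss_nonneg A (A *ᵥ xp) (w t)])
  refine ⟨D 0 + ∑ i, xp i ^ 2 + 1, by linarith [hD_ge 0 le_rfl], fun t ht => ?_⟩
  have hE := nnlsSet.lsqLoss_le_sub hxp (fun i => (pow_pos (hpos t ht.le i) L).le)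
  rw [le_div_iff₀ ht]
  calc lsqLoss A (A *ᵥ xp) (w t) * t ≤ (lsqLoss A y (w t) - lsqLoss A y xp) * t :=
        mul_le_mul_of_nonneg_right hE ht.le
    _ ≤ D 0 - D t := by linarith [hrate t ht.le]
    _ ≤ D 0 + ∑ i, xp i ^ 2 + 1 := by linarith [hD_ge t ht.le]
end
end

section
/- Let L = 2, A ∈ ℝ^{M×N}, y ∈ ℝ^M, ε > 0, and let Q₊ := min_{z ∈ S₊} ‖z‖₁. Let 0 < α ≤ exp(−1/2 − (Q₊² + N e^{−1})/(2ε)). Suppose x : [0,∞) → ℝ^N is differentiable, satisfies the reduced gradient flow x'(t) = −[Aᵀ(A x(t)^{⊙2} − y)] ⊙ x(t) for all t ≥ 0, has x(0) = α·𝟙 (all entries equal to α), and the limit x̃∞ := lim_{t→∞} x(t)^{⊙2} exists. Then ‖x̃∞‖₁ − min_{z ∈ S₊} ‖z‖₁ ≤ ε. -/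
open Filter Topology Matrix

noncomputable section

/-!
Along the flow every coordinate stays positive and `d/dt log xᵢ = -(Aᵀ(A x^⊙2 - y))ᵢ`, so
`∑ cᵢ log xᵢ(t)` is conserved for every `c` in the kernel of `A`. The limit `x̃∞` satisfies the
KKT conditions of the NNLS problem, hence `A x̃∞ = A z` for an `ℓ¹`-minimal solution `z`, and
`c = z - x̃∞` gives `∑ (zᵢ - x̃∞ᵢ) log xᵢ(t)² = 2 log α (‖z‖₁ - ‖x̃∞‖₁)`. Nonnegativity of the
Bregman divergence of `u ↦ u log u` from `z` to `x(t)^⊙2`, as `t → ∞`, then gives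
`(-1 - 2 log α) (‖x̃∞‖₁ - ‖z‖₁) ≤ ∑ zᵢ log zᵢ - ∑ x̃∞ᵢ log x̃∞ᵢ ≤ ‖z‖₁² + N/e`, and the choice
of `α` makes the factor `-1 - 2 log α` at least `(‖z‖₁² + N/e)/ε`.
-/

open Real Set

section RealAnalysis

lemma mul_log_le_mul_log_add_sub {v u : ℝ} (hv : 0 ≤ v) (hu : 0 < u) :
    v * log u ≤ v * log v + u - v := by
  rcases hv.eq_or_lt with rfl | hv
  · simpa using hu.le
  have h := mul_le_mul_of_nonneg_left (log_le_sub_one_of_pos (div_pos hu hv)) hv.le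
  rw [log_div hu.ne' hv.ne', mul_sub_one, mul_div_cancel₀ _ hv.ne'] at h
  linarith

lemma mul_log_le_sq {u : ℝ} (hu : 0 ≤ u) : u * log u ≤ u ^ 2 := by
  rw [sq]; exact mul_le_mul_of_nonneg_left (log_le_self hu) hu

lemma neg_exp_neg_one_le_mul_log {u : ℝ} (hu : 0 ≤ u) : -exp (-1) ≤ u * log u := by
  rcases hu.eq_or_lt with rfl | hu
  · simpa using (exp_pos _).le
  have h := mul_exp_neg_le_exp_neg_one (-log u)
  rw [neg_neg, exp_log hu] at h
  linarith

lemma tendsto_mul_log {α : Type*} {l : Filter α} {u : α → ℝ} {v : ℝ} (hu : Tendsto u l (𝓝 v)) :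
    Tendsto (fun t => v * log (u t)) l (𝓝 (v * log v)) := by
  rcases eq_or_ne v 0 with rfl | hv
  · simpa using tendsto_const_nhds
  · exact ((continuousAt_log hv).tendsto.comp hu).const_mul v

lemma eq_zero_of_tendsto_of_hasDerivAt {f f' : ℝ → ℝ} {L l : ℝ}
    (hf : ∀ t, 0 ≤ t → HasDerivAt f (f' t) t) (hfL : Tendsto f atTop (𝓝 L))
    (hf'l : Tendsto f' atTop (𝓝 l)) : l = 0 := by
  have hslope (n : ℕ) : ∃ c ∈ Ioo (n : ℝ) (n + 1), f' c = (f (n + 1) - f n) / ((n + 1) - n) :=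
    exists_hasDerivAt_eq_slope f f' (lt_add_one _)
      (fun t ht => (hf t (n.cast_nonneg.trans ht.1)).continuousAt.continuousWithinAt)
      (fun t ht => hf t (n.cast_nonneg.trans ht.1.le))
  choose c hc hfc using hslope
  have hc_top : Tendsto c atTop atTop :=
    tendsto_atTop_mono (fun n => (hc n).1.le) tendsto_natCast_atTop_atTop
  have hdiff : Tendsto (fun n : ℕ => (f (n + 1) - f n) / ((n + 1) - n)) atTop (𝓝 (L - L)) := by
    simp only [add_sub_cancel_left, div_one]
    exact (hfL.comp (tendsto_natCast_atTop_atTop.atTop_add tendsto_const_nhds)).sub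
      (hfL.comp tendsto_natCast_atTop_atTop)
  rw [sub_self] at hdiff
  exact tendsto_nhds_unique ((hf'l.comp hc_top).congr hfc) hdiff

lemma nonneg_of_tendsto_of_hasDerivAt_eq_neg_mul {f a : ℝ → ℝ} {l : ℝ}
    (hf : ∀ t, 0 ≤ t → HasDerivAt f (-(a t * f t)) t) (hpos : ∀ t, 0 ≤ t → 0 < f t)
    (hf0 : Tendsto f atTop (𝓝 0)) (ha : Tendsto a atTop (𝓝 l)) : 0 ≤ l := by
  by_contra! hl
  obtain ⟨T, hT⟩ := eventually_atTop.1
    ((ha.eventually (gt_mem_nhds hl)).and (eventually_ge_atTop 0))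
  have hmono : MonotoneOn f (Ici T) := by
    refine monotoneOn_of_hasDerivWithinAt_nonneg (convex_Ici T)
      (fun t ht => (hf t (hT t ht).2).continuousAt.continuousWithinAt)
      (fun t ht => (hf t (hT t (interior_subset ht)).2).hasDerivWithinAt) fun t ht => ?_
    obtain ⟨hat, ht0⟩ := hT t (interior_subset ht)
    nlinarith [hpos t ht0]
  have hfT : f T ≤ 0 := ge_of_tendsto hf0 (eventually_atTop.2
    ⟨T, fun t ht => hmono self_mem_Ici ht ht⟩)
  linarith [hpos T (hT T le_rfl).2]

lemma eq_zero_of_hasDerivAt_eq_neg_mul {f a : ℝ → ℝ} {T : ℝ} (hT : 0 ≤ T)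
    (ha : ContinuousOn a (Icc 0 T)) (hf : ∀ t ∈ Icc 0 T, HasDerivAt f (-(a t * f t)) t)
    (hfT : f T = 0) : f 0 = 0 := by
  obtain ⟨B, hB⟩ := isCompact_Icc.exists_bound_of_continuousOn ha
  have hlip : ∀ t ∈ Ioc 0 T, LipschitzOnWith B.toNNReal (fun u => -(a t * u)) univ := by
    refine fun t ht => lipschitzOnWith_iff_dist_le_mul.2 fun u _ w _ => ?_
    rw [dist_neg_neg, dist_eq_norm, ← mul_sub, norm_mul, ← dist_eq_norm]
    exact mul_le_mul_of_nonneg_right ((hB t (Ioc_subset_Icc_self ht)).trans (le_coe_toNNReal B))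
      dist_nonneg
  have hcont : ContinuousOn f (Icc 0 T) := fun t ht => (hf t ht).continuousAt.continuousWithinAt
  have := ODE_solution_unique_of_mem_Icc_left hlip hcont
    (fun t ht => (hf t (Ioc_subset_Icc_self ht)).hasDerivWithinAt) (fun _ _ => mem_univ _)
    continuousOn_const (fun t _ => by simpa using (hasDerivWithinAt_const t _ (0 : ℝ)))
    (fun _ _ => mem_univ _) hfT
  exact this (left_mem_Icc.2 hT)

lemma pos_of_hasDerivAt_eq_neg_mul {f a : ℝ → ℝ} (ha : ContinuousOn a (Ici 0))
    (hf : ∀ t, 0 ≤ t → HasDerivAt f (-(a t * f t)) t) (h0 : 0 < f 0) {t : ℝ} (ht : 0 ≤ t) :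
    0 < f t := by
  by_contra! hft
  obtain ⟨T, hT, hfT⟩ := intermediate_value_Icc' ht
    (fun s hs => (hf s hs.1).continuousAt.continuousWithinAt) ⟨hft, h0.le⟩
  have := eq_zero_of_hasDerivAt_eq_neg_mul hT.1 (ha.mono (Icc_subset_Ici_self))
    (fun s hs => hf s hs.1) hfT
  linarith

lemma sub_le_of_mul_sub_le {c ε μ S Q : ℝ} (hc : 0 < c) (hε : 0 < ε)
    (hμ : μ ≤ -(1/2) - c / (2 * ε)) (h : (1 + 2 * μ) * (Q - S) ≤ c) : S - Q ≤ ε := by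
  have hcκ : c ≤ ε * (-1 - 2 * μ) := by
    have := mul_le_mul_of_nonneg_left hμ (by positivity : 0 ≤ 2 * ε)
    rw [mul_sub, mul_div_cancel₀ _ (by positivity)] at this
    linarith
  have hκ : 0 < -1 - 2 * μ := pos_of_mul_pos_right (hc.trans_le hcκ) hε.le
  refine le_of_mul_le_mul_left ?_ hκ
  linarith [show (-1 - 2 * μ) * (S - Q) = (1 + 2 * μ) * (Q - S) by ring]

end RealAnalysis

section NNLS

variable {m n : Type*} [Fintype m] [Fintype n] (A : Matrix m n ℝ) (y : m → ℝ)

/-- Half the gradient of `v ↦ ‖A v - y‖²`. -/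
def nnlsGrad (v : n → ℝ) : n → ℝ := Aᵀ *ᵥ (A *ᵥ v - y)

lemma continuous_nnlsGrad : Continuous (nnlsGrad A y) :=
  continuous_const.matrix_mulVec
    ((continuous_const.matrix_mulVec continuous_id).sub continuous_const)

lemma dotProduct_nnlsGrad (c v : n → ℝ) : c ⬝ᵥ nnlsGrad A y v = (A *ᵥ c) ⬝ᵥ (A *ᵥ v - y) := by
  rw [nnlsGrad, dotProduct_mulVec, vecMul_transpose]

variable {A y}

lemma sum_sq_add_sum_sq_le_of_kkt {v w : n → ℝ} (hg : ∀ i, 0 ≤ nnlsGrad A y v i)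
    (hcomp : ∀ i, nnlsGrad A y v i * v i = 0) (hw : ∀ i, 0 ≤ w i) :
    ∑ j, (A.mulVec v j - y j) ^ 2 + ∑ j, A.mulVec (w - v) j ^ 2 ≤
      ∑ j, (A.mulVec w j - y j) ^ 2 := by
  have hcross : 0 ≤ (A *ᵥ (w - v)) ⬝ᵥ (A *ᵥ v - y) := by
    rw [← dotProduct_nnlsGrad]
    refine Finset.sum_nonneg fun i _ => ?_
    have := mul_nonneg (hg i) (hw i)
    simp only [Pi.sub_apply]
    nlinarith [hcomp i]
  have hexpand : ∑ j, (A.mulVec w j - y j) ^ 2 = ∑ j, (A.mulVec v j - y j) ^ 2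
      + ∑ j, A.mulVec (w - v) j ^ 2 + 2 * ((A *ᵥ (w - v)) ⬝ᵥ (A *ᵥ v - y)) := by
    simp only [dotProduct, Finset.mul_sum, ← Finset.sum_add_distrib, Matrix.mulVec_sub,
      Pi.sub_apply]
    exact Finset.sum_congr rfl fun j _ => by ring
  linarith

lemma mulVec_sub_eq_zero_of_mem_nnlsSet {M N : ℕ} {A : Matrix (Fin M) (Fin N) ℝ} {y : Fin M → ℝ}
    {z v : Fin N → ℝ} (hz : z ∈ nnlsSet A y) (hv : ∀ i, 0 ≤ v i)
    (hg : ∀ i, 0 ≤ nnlsGrad A y v i) (hcomp : ∀ i, nnlsGrad A y v i * v i = 0) :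
    A *ᵥ (z - v) = 0 := by
  have h := sum_sq_add_sum_sq_le_of_kkt hg hcomp hz.1
  have hsq : (A *ᵥ (z - v)) ⬝ᵥ (A *ᵥ (z - v)) = 0 := by
    simp only [dotProduct, ← sq]
    linarith [hz.2 v hv,
      Finset.sum_nonneg fun j (_ : j ∈ Finset.univ) => sq_nonneg (A.mulVec (z - v) j)]
  exact dotProduct_self_eq_zero.1 hsq

end NNLS

namespace GradFlow

variable {M N : ℕ} {A : Matrix (Fin M) (Fin N) ℝ} {y : Fin M → ℝ} {x : ℝ → Fin N → ℝ}

lemma hasDerivAt (hflow : GradFlow A y 2 x) {t : ℝ} (ht : 0 ≤ t) (i : Fin N) :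
    HasDerivAt (fun s => x s i) (-(nnlsGrad A y (fun j => x t j ^ 2) i * x t i)) t := by
  simpa [nnlsGrad] using hflow t ht i

lemma continuousOn_nnlsGrad (hflow : GradFlow A y 2 x) (i : Fin N) :
    ContinuousOn (fun t => nnlsGrad A y (fun j => x t j ^ 2) i) (Ici 0) := fun _ ht =>
  (((continuous_apply i).comp (continuous_nnlsGrad A y)).continuousAt.comp
    (continuousAt_pi.2 fun j => (hflow.hasDerivAt ht j).continuousAt.pow 2)).continuousWithinAt

lemma pos_s2 (hflow : GradFlow A y 2 x) (h0 : ∀ i, 0 < x 0 i) : ∀ t, 0 ≤ t → ∀ i, 0 < x t i :=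
  fun _ ht i => pos_of_hasDerivAt_eq_neg_mul (hflow.continuousOn_nnlsGrad i)
    (fun _ hs => hflow.hasDerivAt hs i) (h0 i) ht

lemma kkt_of_tendsto (hflow : GradFlow A y 2 x) (hpos : ∀ t, 0 ≤ t → ∀ i, 0 < x t i)
    {v : Fin N → ℝ} (hlim : Tendsto (fun t i => x t i ^ 2) atTop (𝓝 v)) :
    (∀ i, 0 ≤ nnlsGrad A y v i) ∧ ∀ i, nnlsGrad A y v i * v i = 0 := by
  have hv (i : Fin N) : 0 ≤ v i := ge_of_tendsto' (tendsto_pi_nhds.1 hlim i) fun _ => sq_nonneg _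
  have hx (i : Fin N) : Tendsto (fun t => x t i) atTop (𝓝 (√(v i))) := by
    refine (((continuous_sqrt.tendsto _).comp (tendsto_pi_nhds.1 hlim i))).congr' ?_
    filter_upwards [eventually_ge_atTop 0] with t ht
    exact sqrt_sq (hpos t ht i).le
  have hg (i : Fin N) : Tendsto (fun t => nnlsGrad A y (fun j => x t j ^ 2) i) atTop
      (𝓝 (nnlsGrad A y v i)) :=
    tendsto_pi_nhds.1 (((continuous_nnlsGrad A y).tendsto v).comp hlim) i
  have hstat (i : Fin N) : nnlsGrad A y v i * √(v i) = 0 :=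
    neg_eq_zero.1 (eq_zero_of_tendsto_of_hasDerivAt (fun _ ht => hflow.hasDerivAt ht i) (hx i)
      ((hg i).mul (hx i)).neg)
  refine ⟨fun i => ?_, fun i => by rw [← sq_sqrt (hv i), sq, ← mul_assoc, hstat, zero_mul]⟩
  rcases (hv i).eq_or_lt with hvi | hvi
  · refine nonneg_of_tendsto_of_hasDerivAt_eq_neg_mul (fun _ ht => hflow.hasDerivAt ht i)
      (fun t ht => hpos t ht i) ?_ (hg i)
    simpa [← hvi] using hx i
  · exact ((mul_eq_zero.1 (hstat i)).resolve_right (sqrt_pos.2 hvi).ne').ge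

lemma sum_mul_log_eq (hflow : GradFlow A y 2 x) (hpos : ∀ t, 0 ≤ t → ∀ i, 0 < x t i)
    {c : Fin N → ℝ} (hc : A *ᵥ c = 0) {t : ℝ} (ht : 0 ≤ t) :
    ∑ i, c i * log (x t i) = ∑ i, c i * log (x 0 i) := by
  have hderiv {s : ℝ} (hs : 0 ≤ s) : HasDerivAt (fun s => ∑ i, c i * log (x s i)) 0 s := by
    have h := HasDerivAt.fun_sum fun i (_ : i ∈ Finset.univ) =>
      ((hflow.hasDerivAt hs i).log (hpos s hs i).ne').const_mul (c i)
    have hcancel (i : Fin N) : c i * (-(nnlsGrad A y (fun j => x s j ^ 2) i * x s i) / x s i) =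
        -(c i * nnlsGrad A y (fun j => x s j ^ 2) i) := by
      field_simp [(hpos s hs i).ne']
    rwa [Finset.sum_congr rfl fun i _ => hcancel i, Finset.sum_neg_distrib, ← dotProduct,
      dotProduct_nnlsGrad, hc, zero_dotProduct, neg_zero] at h
  exact constant_of_has_deriv_right_zero
    (fun s hs => (hderiv hs.1).continuousAt.continuousWithinAt)
    (fun s hs => (hderiv hs.1).hasDerivWithinAt) t ⟨ht, le_rfl⟩

lemma sum_sub_mul_log_sq_eq (hflow : GradFlow A y 2 x) (hpos : ∀ t, 0 ≤ t → ∀ i, 0 < x t i)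
    {α : ℝ} (hinit : x 0 = fun _ => α) {z v : Fin N → ℝ} (hAz : A *ᵥ (z - v) = 0) {t : ℝ}
    (ht : 0 ≤ t) :
    ∑ i, (z i - v i) * log (x t i ^ 2) = 2 * log α * (∑ i, z i - ∑ i, v i) := by
  have hcons := hflow.sum_mul_log_eq hpos hAz ht
  simp only [hinit, Pi.sub_apply] at hcons
  simp only [log_pow, Nat.cast_ofNat, mul_left_comm _ (2 : ℝ), ← Finset.mul_sum, hcons,
    ← Finset.sum_mul, Finset.sum_sub_distrib]
  ring

end GradFlow

lemma one_add_mul_sum_sub_le_of_tendsto {α ι : Type*} [Fintype ι] {l : Filter α} [l.NeBot]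
    {u : α → ι → ℝ} {z v : ι → ℝ} {μ : ℝ} (hz : ∀ i, 0 ≤ z i) (hu : ∀ᶠ t in l, ∀ i, 0 < u t i)
    (hlim : Tendsto u l (𝓝 v))
    (hcons : ∀ᶠ t in l, ∑ i, (z i - v i) * log (u t i) = μ * (∑ i, z i - ∑ i, v i)) :
    (1 + μ) * (∑ i, z i - ∑ i, v i) ≤ ∑ i, z i * log (z i) - ∑ i, v i * log (v i) := by
  have hlow : Tendsto (fun t => ∑ i, v i * log (u t i) + μ * (∑ i, z i - ∑ i, v i)) l
      (𝓝 (∑ i, v i * log (v i) + μ * (∑ i, z i - ∑ i, v i))) :=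
    (tendsto_finsetSum _ fun i _ => tendsto_mul_log (tendsto_pi_nhds.1 hlim i)).add_const _
  have hup : Tendsto (fun t => ∑ i, z i * log (z i) + ∑ i, u t i - ∑ i, z i) l
      (𝓝 (∑ i, z i * log (z i) + ∑ i, v i - ∑ i, z i)) :=
    ((tendsto_finsetSum _ fun i _ => tendsto_pi_nhds.1 hlim i).const_add _).sub_const _
  have hle := le_of_tendsto_of_tendsto hlow hup <| by
    filter_upwards [hu, hcons] with t hut hct
    have hbreg := Finset.sum_le_sum fun i (_ : i ∈ Finset.univ) =>
      mul_log_le_mul_log_add_sub (hz i) (hut i)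
    simp only [Finset.sum_sub_distrib, Finset.sum_add_distrib] at hbreg
    simp only [sub_mul, Finset.sum_sub_distrib] at hct
    linarith
  linarith

theorem stmt2 {M N : ℕ}
    (A : Matrix (Fin M) (Fin N) ℝ) (y : Fin M → ℝ)
    (ε : ℝ) (hε : 0 < ε)
    (Qp : ℝ) (hQ : IsLeast ((fun z => ∑ i, |z i|) '' nnlsSet A y) Qp)
    (α : ℝ) (hα0 : 0 < α)
    (hα : α ≤ Real.exp (-(1/2) - (Qp ^ 2 + N * Real.exp (-1)) / (2 * ε)))
    (x : ℝ → Fin N → ℝ) (hinit : x 0 = fun _ => α)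
    (hflow : GradFlow A y 2 x)
    (xinf : Fin N → ℝ)
    (hlim : Tendsto (fun t => fun i => x t i ^ 2) atTop (𝓝 xinf)) :
    (∑ i, |xinf i|) - Qp ≤ ε := by
  obtain ⟨⟨z, hz, rfl⟩, -⟩ := hQ
  have hxinf (i : Fin N) : 0 ≤ xinf i :=
    ge_of_tendsto' (tendsto_pi_nhds.1 hlim i) fun _ => sq_nonneg _
  simp only [abs_of_nonneg (hz.1 _), abs_of_nonneg (hxinf _)] at hα ⊢
  have hpos := hflow.pos_s2 fun _ => by simpa [hinit] using hα0
  obtain ⟨hg, hcomp⟩ := hflow.kkt_of_tendsto hpos hlim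
  have hAz := mulVec_sub_eq_zero_of_mem_nnlsSet hz hxinf hg hcomp
  have hgap := one_add_mul_sum_sub_le_of_tendsto (μ := 2 * log α) hz.1
    (eventually_atTop.2 ⟨0, fun t ht i => pow_pos (hpos t ht i) 2⟩) hlim
    (eventually_atTop.2 ⟨0, fun t => hflow.sum_sub_mul_log_sq_eq hpos hinit hAz⟩)
  have hzlogz : ∑ i, z i * log (z i) ≤ (∑ i, z i) ^ 2 :=
    (Finset.sum_le_sum fun i _ => mul_log_le_sq (hz.1 i)).trans
      (Finset.sum_sq_le_sq_sum_of_nonneg fun i _ => hz.1 i)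
  have hxlogx : -(N * exp (-1)) ≤ ∑ i, xinf i * log (xinf i) := by
    simpa using Finset.card_nsmul_le_sum Finset.univ _ _ fun i _ =>
      neg_exp_neg_one_le_mul_log (hxinf i)
  rcases N.eq_zero_or_pos with rfl | hN
  · simpa using hε.le
  have hc : 0 < (∑ i, z i) ^ 2 + N * exp (-1) :=
    add_pos_of_nonneg_of_pos (sq_nonneg _) (mul_pos (Nat.cast_pos.2 hN) (exp_pos _))
  exact sub_le_of_mul_sub_le hc hε ((log_le_log hα0 hα).trans_eq (log_exp _)) (by linarith)
end
end

section
/- Let L ≥ 2 be an integer, A ∈ ℝ^{M×N}, y ∈ ℝ^M. Suppose x^{(1)}, …, x^{(L)} : [0,∞) → ℝ^N are differentiable curves satisfying, for every k ∈ [L] and t ≥ 0, (x^{(k)})'(t) = −[Aᵀ(A(x^{(1)}(t) ⊙ ⋯ ⊙ x^{(L)}(t)) − y)] ⊙ (⊙_{j ≠ k} x^{(j)}(t)) (the negative gradient flow of L_over(x^{(1)},…,x^{(L)}) = ½‖A(x^{(1)} ⊙ ⋯ ⊙ x^{(L)}) − y‖₂² in the k-th factor). If x^{(k)}(0) = x^{(k')}(0)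 for all k, k' ∈ [L], then x^{(k)}(t) = x^{(k')}(t) for all k, k' ∈ [L] and all t ≥ 0, and the common curve x := x^{(1)} satisfies x'(t) = −[Aᵀ(A x(t)^{⊙L} − y)] ⊙ x(t)^{⊙(L−1)} for all t ≥ 0. -/
open Matrix Set Finset

noncomputable section

/-!
For factors `k ≠ k'` the difference `u = x⁽ᵏ⁾ - x⁽ᵏ'⁾` satisfies, coordinatewise, the linear
equation `u' = c u`, since the two right-hand sides differ only in the single factor
`x⁽ᵏ'⁾` versus `x⁽ᵏ⁾` of the product; here `c` is the common gradient coefficient times the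
product of the remaining `L - 2` factors, a continuous function of `t`. Grönwall's inequality
then forces `u ≡ 0` from `u(0) = 0`. Once all factors agree, the products in the flow are powers
of the common curve.
-/

theorem eq_zero_of_hasDerivAt_eq_smul_self {E : Type*} [NormedAddCommGroup E] [NormedSpace ℝ E]
    {u : ℝ → E} {c : ℝ → ℝ} {a : ℝ} (hc : ContinuousOn c (Ici a))
    (hu : ∀ t, a ≤ t → HasDerivAt u (c t • u t) t) (ha : u a = 0) {t : ℝ} (ht : a ≤ t) :
    u t = 0 := by
  obtain ⟨K, hK⟩ := isCompact_Icc.exists_bound_of_continuousOn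
    (hc.mono (Icc_subset_Ici_self : Icc a t ⊆ Ici a))
  refine eq_zero_of_abs_deriv_le_mul_abs_self_of_eq_zero_right (K := K)
    (fun s hs => (hu s hs.1).continuousAt.continuousWithinAt)
    (fun s hs => (hu s hs.1).hasDerivWithinAt) ha (fun s hs => ?_) t ⟨ht, le_rfl⟩
  rw [norm_smul]
  exact mul_le_mul_of_nonneg_right (hK s (Ico_subset_Icc_self hs)) (norm_nonneg _)

theorem Finset.prod_erase_sub_prod_erase {ι R : Type*} [DecidableEq ι] [CommRing R]
    {s : Finset ι} {f : ι → R} {k k' : ι} (hk : k ∈ s) (hk' : k' ∈ s) (hne : k ≠ k') :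
    ∏ l ∈ s.erase k, f l - ∏ l ∈ s.erase k', f l =
      (f k' - f k) * ∏ l ∈ (s.erase k).erase k', f l := by
  rw [← mul_prod_erase (s.erase k) f (mem_erase.2 ⟨hne.symm, hk'⟩),
    ← mul_prod_erase (s.erase k') f (mem_erase.2 ⟨hne, hk⟩), erase_right_comm]
  ring

section OverparameterizedFlow

variable {M N L : ℕ}

def leastSquaresGradient (A : Matrix (Fin M) (Fin N) ℝ) (y : Fin M → ℝ) (x : Fin N → ℝ) :
    Fin N → ℝ :=
  Aᵀ *ᵥ (A *ᵥ x - y)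

theorem continuous_leastSquaresGradient (A : Matrix (Fin M) (Fin N) ℝ) (y : Fin M → ℝ) :
    Continuous (leastSquaresGradient A y) := by
  unfold leastSquaresGradient
  fun_prop

def IsOverparameterizedGradientFlow (A : Matrix (Fin M) (Fin N) ℝ) (y : Fin M → ℝ)
    (X : Fin L → ℝ → Fin N → ℝ) : Prop :=
  ∀ k t, 0 ≤ t → ∀ i, HasDerivAt (fun s => X k s i)
    (-(leastSquaresGradient A y (fun j => ∏ l, X l t j) i * ∏ l ∈ univ.erase k, X l t i)) t

variable {A : Matrix (Fin M) (Fin N) ℝ} {y : Fin M → ℝ} {X : Fin L → ℝ → Fin N → ℝ}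

theorem continuousOn_leastSquaresGradient_mul_prod {S : Set ℝ}
    (hX : ∀ l j, ContinuousOn (fun s => X l s j) S) (s : Finset (Fin L)) (i : Fin N) :
    ContinuousOn (fun t => leastSquaresGradient A y (fun j => ∏ l, X l t j) i *
      ∏ l ∈ s, X l t i) S := by
  have hprod : ContinuousOn (fun t j => ∏ l, X l t j) S :=
    continuousOn_pi.2 fun j => continuousOn_finsetProd _ fun l _ => hX l j
  exact ((continuous_apply i).comp (continuous_leastSquaresGradient A y)).comp_continuousOn
    hprod |>.mul (continuousOn_finsetProd _ fun l _ => hX l i)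

theorem IsOverparameterizedGradientFlow.hasDerivAt_sub
    (hflow : IsOverparameterizedGradientFlow A y X)
    {k k' : Fin L} (hne : k ≠ k') {t : ℝ} (ht : 0 ≤ t) (i : Fin N) :
    HasDerivAt (fun s => X k s i - X k' s i)
      ((leastSquaresGradient A y (fun j => ∏ l, X l t j) i *
          ∏ l ∈ (univ.erase k).erase k', X l t i) • (X k t i - X k' t i)) t := by
  refine ((hflow k t ht i).sub (hflow k' t ht i)).congr_deriv ?_
  have := prod_erase_sub_prod_erase (f := fun l => X l t i) (mem_univ k) (mem_univ k') hne
  rw [smul_eq_mul]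
  linear_combination (-leastSquaresGradient A y (fun j => ∏ l, X l t j) i) * this

theorem IsOverparameterizedGradientFlow.eq_of_initial_eq
    (hflow : IsOverparameterizedGradientFlow A y X) (hinit : ∀ k k', X k 0 = X k' 0)
    (k k' : Fin L) {t : ℝ} (ht : 0 ≤ t) : X k t = X k' t := by
  rcases eq_or_ne k k' with rfl | hne
  · rfl
  have hX : ∀ l j, ContinuousOn (fun s => X l s j) (Ici 0) :=
    fun l j s hs => (hflow l s hs j).continuousAt.continuousWithinAt
  funext i
  exact sub_eq_zero.1 <| eq_zero_of_hasDerivAt_eq_smul_self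
    (continuousOn_leastSquaresGradient_mul_prod hX _ i)
    (fun s hs => hflow.hasDerivAt_sub hne hs i) (by simp [hinit k k']) ht

end OverparameterizedFlow

theorem stmt5 {M N : ℕ} (L : ℕ) (hL : 2 ≤ L)
    (A : Matrix (Fin M) (Fin N) ℝ) (y : Fin M → ℝ)
    (X : Fin L → ℝ → Fin N → ℝ)
    (hflow : ∀ k : Fin L, ∀ t : ℝ, 0 ≤ t → ∀ i : Fin N,
      HasDerivAt (fun s => X k s i)
        (-(Matrix.mulVec Aᵀ (A.mulVec (fun j => ∏ l, X l t j) - y) i *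
            ∏ l ∈ Finset.univ.erase k, X l t i)) t)
    (hinit : ∀ k k' : Fin L, X k 0 = X k' 0) :
    (∀ k k' : Fin L, ∀ t : ℝ, 0 ≤ t → X k t = X k' t) ∧
    (∀ t : ℝ, 0 ≤ t → ∀ i : Fin N,
      HasDerivAt (fun s => X (⟨0, by omega⟩ : Fin L) s i)
        (-(Matrix.mulVec Aᵀ
            (A.mulVec (fun j => X (⟨0, by omega⟩ : Fin L) t j ^ L) - y) i *
            X (⟨0, by omega⟩ : Fin L) t i ^ (L - 1))) t) := by
  have hflow' : IsOverparameterizedGradientFlow A y X := hflow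
  have hX : ∀ k k' t, 0 ≤ t → X k t = X k' t :=
    fun k k' _ ht => hflow'.eq_of_initial_eq hinit k k' ht
  refine ⟨hX, fun t ht i => ?_⟩
  set z : Fin L := ⟨0, by omega⟩
  have hXz : ∀ l, X l t = X z t := fun l => hX l z t ht
  simpa [hXz] using hflow z t ht i
end
end

section
/- Let L = 2, A ∈ ℝ^{M×N}, y ∈ ℝ^M. Suppose x : [0,∞) → ℝ^N is differentiable, satisfies the reduced gradient flow x'(t) = −[Aᵀ(A x(t)^{⊙2} − y)] ⊙ x(t) for all t ≥ 0, has x(0) entrywise strictly positive, and the limit x̃∞ := lim_{t→∞} x(t)^{⊙2} exists and lies in S₊. Then x̃∞ minimizes over z ∈ S₊ the function g(z) := ⟨z, log(z) − 𝟙 − log(x(0)^{⊙2})⟩ = Σₙ zₙ(log zₙ − 1 − log((x(0))ₙ²)), with the convention 0·log 0 = 0. -/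
/-!
Along the flow each coordinate solves a linear equation `xₙ' = -rₙ(t) xₙ` and therefore stays
positive, and `d/dt log xₙ² = -2 (Aᵀ(A x² - y))ₙ`. Every `z ∈ S₊` has `A z = A x̃∞`, so for
`c = z - x̃∞ ∈ ker A` the quantity `∑ cₙ log xₙ(t)²` is conserved. Letting `t → ∞` first forces
`supp z ⊆ supp x̃∞` (otherwise the sum tends to `-∞`) and then gives
`∑ cₙ log xₙ(0)² = ∑ cₙ log x̃∞ₙ`, after which `g(z) - g(x̃∞)` is the Bregman divergence
`∑ zₙ log (zₙ / x̃∞ₙ) - zₙ + x̃∞ₙ ≥ 0`.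
-/

open Filter Topology Matrix

noncomputable section

open Real Set

theorem mulVec_eq_of_mem_nnlsSet {M N : ℕ} {A : Matrix (Fin M) (Fin N) ℝ} {y : Fin M → ℝ}
    {z w : Fin N → ℝ} (hz : z ∈ nnlsSet A y) (hw : w ∈ nnlsSet A y) :
    A *ᵥ z = A *ᵥ w := by
  set u : Fin N → ℝ := (1 / 2 : ℝ) • (z + w)
  have hu : ∀ i, 0 ≤ u i := fun i => by
    have := hz.1 i; have := hw.1 i; simp only [u, Pi.smul_apply, Pi.add_apply, smul_eq_mul]
    positivity
  have hAu : A *ᵥ u = (1 / 2 : ℝ) • (A *ᵥ z + A *ᵥ w) := by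
    rw [Matrix.mulVec_smul, Matrix.mulVec_add]
  -- parallelogram law for the residuals of `z`, `w` and of their (feasible) midpoint `u`
  have hpar : ∑ j, ((A *ᵥ z) j - (A *ᵥ w) j) ^ 2 = 2 * ∑ j, ((A *ᵥ z) j - y j) ^ 2
      + 2 * ∑ j, ((A *ᵥ w) j - y j) ^ 2 - 4 * ∑ j, ((A *ᵥ u) j - y j) ^ 2 := by
    simp only [Finset.mul_sum, ← Finset.sum_add_distrib, ← Finset.sum_sub_distrib, hAu]
    refine Finset.sum_congr rfl fun j _ => ?_
    simp only [Pi.smul_apply, Pi.add_apply, smul_eq_mul]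
    ring
  have hzero : ∑ j, ((A *ᵥ z) j - (A *ᵥ w) j) ^ 2 = 0 := by
    have := hz.2 w hw.1; have := hw.2 z hz.1; have := hz.2 u hu
    exact le_antisymm (by linarith) (Finset.sum_nonneg fun j _ => sq_nonneg _)
  funext j
  rw [Finset.sum_eq_zero_iff_of_nonneg fun j _ => sq_nonneg _] at hzero
  exact sub_eq_zero.1 (pow_eq_zero_iff two_ne_zero |>.1 (hzero j (Finset.mem_univ j)))

theorem sub_le_mul_log_sub_log {z w : ℝ} (hz : 0 ≤ z) (hw : 0 ≤ w) (hzw : w = 0 → z = 0) :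
    z - w ≤ z * (log z - log w) := by
  rcases hz.eq_or_lt with rfl | hz
  · simpa using hw
  have hw : 0 < w := hw.lt_of_ne fun h => hz.ne' (hzw h.symm)
  have h := Real.log_le_sub_one_of_pos (div_pos hw hz)
  rw [Real.log_div hw.ne' hz.ne'] at h
  have := mul_le_mul_of_nonneg_left h hz.le
  rw [mul_sub_one, mul_div_cancel₀ _ hz.ne'] at this
  linarith

theorem sum_mul_log_sub_one_sub_log_le {ι : Type*} [Fintype ι] {z w p : ι → ℝ}
    (hz : ∀ n, 0 ≤ z n) (hw : ∀ n, 0 ≤ w n) (hzw : ∀ n, w n = 0 → z n = 0)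
    (hp : ∑ n, (z n - w n) * log (p n) = ∑ n, (z n - w n) * log (w n)) :
    ∑ n, w n * (log (w n) - 1 - log (p n)) ≤ ∑ n, z n * (log (z n) - 1 - log (p n)) := by
  have hbregman : 0 ≤ ∑ n, (z n * (log (z n) - log (w n)) - (z n - w n)) :=
    Finset.sum_nonneg fun n _ => sub_nonneg.2 (sub_le_mul_log_sub_log (hz n) (hw n) (hzw n))
  have hdiff : ∑ n, z n * (log (z n) - 1 - log (p n)) - ∑ n, w n * (log (w n) - 1 - log (p n))
      = ∑ n, (z n * (log (z n) - log (w n)) - (z n - w n))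
        + (∑ n, (z n - w n) * log (w n) - ∑ n, (z n - w n) * log (p n)) := by
    simp only [← Finset.sum_sub_distrib, ← Finset.sum_add_distrib]
    exact Finset.sum_congr rfl fun n _ => by ring
  linarith

theorem const_of_hasDerivAt_zero_of_nonneg {f : ℝ → ℝ} (hf : ∀ t, 0 ≤ t → HasDerivAt f 0 t)
    {t : ℝ} (ht : 0 ≤ t) : f t = f 0 :=
  constant_of_has_deriv_right_zero (fun s hs => (hf s hs.1).continuousAt.continuousWithinAt)
    (fun s hs => (hf s hs.1).hasDerivWithinAt) t ⟨ht, le_rfl⟩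

theorem pos_of_hasDerivAt_mul_self_s7 {f g : ℝ → ℝ} (hg : ContinuousOn g (Ici 0))
    (hf : ∀ t, 0 ≤ t → HasDerivAt f (g t * f t) t) (h0 : 0 < f 0) {t : ℝ} (ht : 0 ≤ t) :
    0 < f t := by
  have hg' : Continuous fun s => g (max s 0) :=
    hg.comp_continuous (by fun_prop) fun s => le_max_right s 0
  set G : ℝ → ℝ := fun t => ∫ s in (0 : ℝ)..t, g (max s 0)
  have hG : ∀ s, 0 ≤ s → HasDerivAt G (g s) s := fun s hs => by
    simpa [max_eq_left hs] using (hg'.integral_hasStrictDerivAt 0 s).hasDerivAt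
  -- `exp (-G)` is an integrating factor
  have hconst : f t * exp (-G t) = f 0 * exp (-G 0) :=
    const_of_hasDerivAt_zero_of_nonneg (f := fun t => f t * exp (-G t)) (fun s hs => by
      refine ((hf s hs).mul (hG s hs).neg.exp).congr_deriv ?_
      ring) ht
  have : 0 < f t * exp (-G t) := hconst ▸ by positivity
  exact pos_of_mul_pos_left this (exp_pos _).le

section SumMulLog

variable {α ι : Type*} [Fintype ι] {l : Filter α} {u : ι → α → ℝ} {a c : ι → ℝ}

theorem tendsto_sum_mul_log (hu : ∀ n, Tendsto (u n) l (𝓝 (a n))) (hc : ∀ n, a n = 0 → c n = 0) :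
    Tendsto (fun t => ∑ n, c n * log (u n t)) l (𝓝 (∑ n, c n * log (a n))) := by
  refine tendsto_finsetSum _ fun n _ => ?_
  by_cases han : a n = 0
  · simpa [hc n han] using tendsto_const_nhds
  · exact ((continuousAt_log han).tendsto.comp (hu n)).const_mul _

theorem isBoundedUnder_le_mul_log {v : α → ℝ} {b d : ℝ} (hv : Tendsto v l (𝓝 b))
    (hv0 : ∀ᶠ t in l, 0 ≤ v t) (hd : b = 0 → 0 ≤ d) :
    IsBoundedUnder (· ≤ ·) l fun t => d * log (v t) := by
  by_cases hb : b = 0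
  · subst hb
    refine ⟨0, eventually_map.2 ?_⟩
    filter_upwards [hv.eventually (eventually_le_nhds zero_lt_one), hv0] with t hv1 hv0
    exact mul_nonpos_of_nonneg_of_nonpos (hd rfl) (log_nonpos hv0 hv1)
  · exact (((continuousAt_log hb).tendsto.comp hv).const_mul d).isBoundedUnder_le

theorem tendsto_sum_mul_log_atBot [DecidableEq ι] (hu : ∀ n, Tendsto (u n) l (𝓝 (a n)))
    (hpos : ∀ n, ∀ᶠ t in l, 0 < u n t) (hc : ∀ n, a n = 0 → 0 ≤ c n) {m : ι} (ham : a m = 0)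
    (hcm : 0 < c m) : Tendsto (fun t => ∑ n, c n * log (u n t)) l atBot := by
  have hm : Tendsto (fun t => c m * log (u m t)) l atBot := by
    have : Tendsto (u m) l (𝓝[>] 0) :=
      tendsto_nhdsWithin_iff.2 ⟨ham ▸ hu m, hpos m⟩
    exact (tendsto_log_nhdsGT_zero.comp this).const_mul_atBot hcm
  obtain ⟨C, hC⟩ := isBoundedUnder_le_sum (Finset.univ.erase m) fun n _ =>
    isBoundedUnder_le_mul_log (hu n) ((hpos n).mono fun _ h => h.le) (hc n)
  simp_rw [← Finset.add_sum_erase _ _ (Finset.mem_univ m)]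
  exact tendsto_atBot_add_right_of_ge' _ C hm (by simpa using hC)

theorem eq_zero_of_tendsto_sum_mul_log [l.NeBot] (hu : ∀ n, Tendsto (u n) l (𝓝 (a n)))
    (hpos : ∀ n, ∀ᶠ t in l, 0 < u n t) (hc : ∀ n, a n = 0 → 0 ≤ c n) {K : ℝ}
    (hK : Tendsto (fun t => ∑ n, c n * log (u n t)) l (𝓝 K)) {m : ι} (ham : a m = 0) :
    c m = 0 := by
  classical
  refine ((hc m ham).eq_or_lt.resolve_right fun hcm => ?_).symm
  exact not_tendsto_atBot_of_tendsto_nhds hK (tendsto_sum_mul_log_atBot hu hpos hc ham hcm)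

end SumMulLog

namespace GradFlow

variable {M N : ℕ} {A : Matrix (Fin M) (Fin N) ℝ} {y : Fin M → ℝ} {L : ℕ} {x : ℝ → Fin N → ℝ}

theorem continuousOn (hflow : GradFlow A y L x) (i : Fin N) :
    ContinuousOn (fun t => x t i) (Ici 0) :=
  fun t ht => (hflow t ht i).continuousAt.continuousWithinAt

theorem pos_s7 (hflow : GradFlow A y L x) (hL : 2 ≤ L) (hx0 : ∀ i, 0 < x 0 i) {t : ℝ}
    (ht : 0 ≤ t) (i : Fin N) : 0 < x t i := by
  refine pos_of_hasDerivAt_mul_self_s7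
    (g := fun t => -((Aᵀ *ᵥ (A *ᵥ (fun j => x t j ^ L) - y)) i * x t i ^ (L - 2)))
    ?_ (fun s hs => (hflow s hs i).congr_deriv ?_) (hx0 i) ht
  · have hx : ContinuousOn x (Ici 0) := continuousOn_pi.2 hflow.continuousOn
    simp only [Matrix.mulVec, dotProduct, Pi.sub_apply]
    fun_prop
  · rw [show L - 1 = L - 2 + 1 by omega]
    ring

theorem sum_mul_log_sq_eq (hflow : GradFlow A y 2 x) (hx0 : ∀ i, 0 < x 0 i) {c : Fin N → ℝ}
    (hc : A *ᵥ c = 0) {t : ℝ} (ht : 0 ≤ t) :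
    ∑ n, c n * log (x t n ^ 2) = ∑ n, c n * log (x 0 n ^ 2) := by
  refine const_of_hasDerivAt_zero_of_nonneg (f := fun t => ∑ n, c n * log (x t n ^ 2))
    (fun s hs => ?_) ht
  set r := Aᵀ *ᵥ (A *ᵥ (fun j => x s j ^ 2) - y)
  -- `d/dt log (xₙ²) = 2 xₙ' / xₙ = -2 rₙ`, and `c ⬝ᵥ Aᵀ v = (A c) ⬝ᵥ v = 0`
  have hterm : ∀ n ∈ Finset.univ,
      HasDerivAt (fun t => c n * log (x t n ^ 2)) (-2 * (c n * r n)) s := fun n _ => by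
    have hxn := (hflow.pos_s7 le_rfl hx0 hs n).ne'
    refine ((((hflow s hs n).pow 2).log (pow_ne_zero 2 hxn)).const_mul (c n)).congr_deriv ?_
    simp only [Pi.pow_apply, r]
    field_simp
    ring
  have horth : ∑ n, c n * r n = 0 := by
    change c ⬝ᵥ r = 0
    rw [dotProduct_transpose_mulVec, hc, dotProduct_zero]
  simpa [← Finset.mul_sum, horth] using HasDerivAt.fun_sum hterm

end GradFlow

theorem stmt7 {M N : ℕ}
    (A : Matrix (Fin M) (Fin N) ℝ) (y : Fin M → ℝ)
    (x : ℝ → Fin N → ℝ) (hx0 : ∀ i, 0 < x 0 i)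
    (hflow : GradFlow A y 2 x)
    (xinf : Fin N → ℝ)
    (hlim : Tendsto (fun t => fun i => x t i ^ 2) atTop (𝓝 xinf))
    (hmem : xinf ∈ nnlsSet A y) :
    ∀ z ∈ nnlsSet A y,
      ∑ n, xinf n * (Real.log (xinf n) - 1 - Real.log ((x 0 n) ^ 2)) ≤
      ∑ n, z n * (Real.log (z n) - 1 - Real.log ((x 0 n) ^ 2)) := by
  intro z hz
  set c := z - xinf
  have hc : A *ᵥ c = 0 := by rw [Matrix.mulVec_sub, mulVec_eq_of_mem_nnlsSet hz hmem, sub_self]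
  have hu : ∀ n, Tendsto (fun t => x t n ^ 2) atTop (𝓝 (xinf n)) := tendsto_pi_nhds.1 hlim
  have hpos : ∀ n, ∀ᶠ t in atTop, 0 < x t n ^ 2 := fun n =>
    (eventually_ge_atTop 0).mono fun t ht => pow_pos (hflow.pos_s7 le_rfl hx0 ht n) 2
  have hF : Tendsto (fun t => ∑ n, c n * log (x t n ^ 2)) atTop
      (𝓝 (∑ n, c n * log (x 0 n ^ 2))) :=
    tendsto_const_nhds.congr' <| (eventually_ge_atTop 0).mono fun t ht =>
      (hflow.sum_mul_log_sq_eq hx0 hc ht).symm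
  have hsupp : ∀ n, xinf n = 0 → z n = 0 := fun n hn => by
    simpa [c, hn] using eq_zero_of_tendsto_sum_mul_log hu hpos
      (fun m hm => by simpa [c, hm] using hz.1 m) hF hn
  have hlog : ∑ n, c n * log (x 0 n ^ 2) = ∑ n, c n * log (xinf n) :=
    tendsto_nhds_unique hF (tendsto_sum_mul_log hu fun n hn => by simp [c, hn, hsupp n hn])
  exact sum_mul_log_sub_one_sub_log_le hz.1 hmem.1 hsupp hlog
end
end

section
/- Let L ≥ 2 be an integer and let F : ℝ₊^N → ℝ be defined by F(x) = ½ Σₙ (xₙ log xₙ − xₙ) if L = 2 (with the convention 0·log 0 = 0) and F(x) = (L/(2(2−L))) Σₙ xₙ^{2/L} if L > 2. Fix z ∈ ℝ^N with z ≥ 0, and let x : [0,∞) → ℝ^N be a continuous function with x(t) ≥ 0 for all t, x(0) entrywise strictly positive, and ‖x(t)‖₂ → ∞ as t → ∞. Then D_F(z, x(t)) → ∞ as t → ∞, where D_F(p,q) = F(p) − F(q) − ⟨∇F(q), p − q⟩ with ∇F(q)ₙ = ½ log qₙ if L = 2 and ∇F(q)ₙ = qₙ^{(2−L)/L}/(2−L)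 if L > 2. -/
open Filter Topology Matrix

noncomputable section

/-- The Bregman potential `F`: for `L = 2`, `F(x) = ½ Σₙ (xₙ log xₙ − xₙ)` (with `0·log 0 = 0`,
which holds automatically since `Real.log 0 = 0`); for `L > 2`,
`F(x) = (L/(2(2−L))) Σₙ xₙ^{2/L}`. -/
def bregF {N : ℕ} (L : ℕ) (x : Fin N → ℝ) : ℝ :=
  if L = 2 then (1 / 2) * ∑ n, (x n * Real.log (x n) - x n)
  else ((L : ℝ) / (2 * (2 - (L : ℝ)))) * ∑ n, x n ^ ((2 : ℝ) / (L : ℝ))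

/-- The gradient of `F` on the positive orthant:
`∇F(q)ₙ = ½ log qₙ` if `L = 2` and `∇F(q)ₙ = qₙ^{(2−L)/L}/(2−L)` if `L > 2`. -/
def bregGradF {N : ℕ} (L : ℕ) (q : Fin N → ℝ) : Fin N → ℝ :=
  fun n => if L = 2 then (1 / 2) * Real.log (q n)
  else q n ^ (((2 : ℝ) - (L : ℝ)) / (L : ℝ)) / (2 - (L : ℝ))

/-- The Bregman divergence `D_F(p,q) = F(p) − F(q) − ⟨∇F(q), p − q⟩`. -/
def bregD {N : ℕ} (L : ℕ) (p q : Fin N → ℝ) : ℝ :=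
  bregF L p - bregF L q - ∑ n, bregGradF L q n * (p n - q n)

/-!
Writing `D_F(z, q) = F(z) + ∑ₙ gₙ(qₙ)`, each coordinate term grows without bound in `qₙ`,
uniformly in `n`. For `L = 2`, `gₙ(q) = q/2 − zₙ log q / 2 ≥ q/4 − C`, since `zₙ log q` grows
sublinearly. For `L > 2`, `gₙ(q) = q^{2/L}/2 − q^{(2−L)/L} zₙ/(2−L) ≥ q^{2/L}/2`, the cross term
being nonnegative because `2 − L < 0`; subadditivity of `s ↦ s^{2/L}` then bounds the sum below by
`(∑ₙ qₙ)^{2/L}/2`. Finally `‖x(t)‖₂ ≤ ∑ₙ xₙ(t)` on the nonnegative orthant, so `∑ₙ xₙ(t) → ∞`.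
-/

open Finset Real

lemma sqrt_sum_sq_le_sum {ι : Type*} (s : Finset ι) {f : ι → ℝ} (hf : ∀ i ∈ s, 0 ≤ f i) :
    √(∑ i ∈ s, f i ^ 2) ≤ ∑ i ∈ s, f i :=
  sqrt_le_iff.mpr ⟨sum_nonneg hf, sum_sq_le_sq_sum_of_nonneg hf⟩

lemma rpow_sum_le_sum_rpow {ι : Type*} (s : Finset ι) {f : ι → ℝ} (hf : ∀ i ∈ s, 0 ≤ f i)
    {p : ℝ} (hp0 : 0 < p) (hp1 : p ≤ 1) :
    (∑ i ∈ s, f i) ^ p ≤ ∑ i ∈ s, f i ^ p :=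
  le_sum_of_subadditive_on_pred (· ^ p) (0 ≤ ·) (by simp [zero_rpow hp0.ne'])
    (fun _ _ ha hb => rpow_add_le_add_rpow ha hb hp0.le hp1) (fun _ _ => add_nonneg) f hf

-- The `max … 0` is needed at `q = 0`, where `log 0 = 0` rather than `-∞`.
lemma mul_log_le_half_add {z q : ℝ} (hz : 0 ≤ z) (hq : 0 ≤ q) :
    z * log q ≤ q / 2 + max (z * (log (2 * z) - 1)) 0 := by
  rcases hz.eq_or_lt with rfl | hz
  · simp only [zero_mul, max_self]
    positivity
  rcases hq.eq_or_lt with rfl | hq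
  · simp
  have hsplit : log q = log (q / (2 * z)) + log (2 * z) := by
    rw [← log_mul (by positivity) (by positivity), div_mul_cancel₀ _ (by positivity)]
  have hlog : log (q / (2 * z)) ≤ q / (2 * z) - 1 := log_le_sub_one_of_pos (by positivity)
  calc z * log q ≤ z * (q / (2 * z) - 1 + log (2 * z)) := by
        rw [hsplit]; gcongr
    _ = q / 2 + z * (log (2 * z) - 1) := by field_simp; ring
    _ ≤ _ := by gcongr; exact le_max_left _ _

section Bregman

variable {N : ℕ}

lemma bregD_two_eq (z q : Fin N → ℝ) :
    bregD 2 z q = bregF 2 z + ∑ n, (q n / 2 - z n * log (q n) / 2) := by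
  simp only [bregD, bregF, bregGradF, ↓reduceIte]
  rw [sub_sub, sub_eq_add_neg, add_right_inj, mul_sum, ← sum_add_distrib, ← sum_neg_distrib]
  refine sum_congr rfl fun n _ => ?_
  ring

lemma bregD_eq_of_two_lt {L : ℕ} (hL : 2 < L) (z : Fin N → ℝ) {q : Fin N → ℝ}
    (hq : ∀ n, 0 ≤ q n) :
    bregD L z q = bregF L z +
      ∑ n, (q n ^ (2 / L : ℝ) / 2 - q n ^ ((2 - L) / L : ℝ) * z n / (2 - L)) := by
  have hL0 : (L : ℝ) ≠ 0 := by positivity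
  have h2L : (2 : ℝ) - L ≠ 0 := by
    have : (2 : ℝ) < L := by exact_mod_cast hL
    linarith
  have hexp : ((2 - L) / L : ℝ) + 1 = 2 / L := by field_simp; ring
  have hpow : ∀ n, q n ^ ((2 - L) / L : ℝ) * q n = q n ^ (2 / L : ℝ) := fun n => by
    rw [← rpow_add_one' (hq n) (hexp ▸ by positivity), hexp]
  simp only [bregD, bregF, bregGradF, if_neg hL.ne']
  rw [sub_sub, sub_eq_add_neg, add_right_inj, mul_sum, ← sum_add_distrib, ← sum_neg_distrib]
  refine sum_congr rfl fun n _ => ?_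
  rw [← hpow n]
  field_simp
  ring

lemma le_bregD_two {z q : Fin N → ℝ} (hz : ∀ n, 0 ≤ z n) (hq : ∀ n, 0 ≤ q n) :
    bregF 2 z + (∑ n, q n) / 4 - (∑ n, max (z n * (log (2 * z n) - 1)) 0) / 2 ≤
      bregD 2 z q := by
  rw [bregD_two_eq, add_sub_assoc, add_le_add_iff_left, sum_div, sum_div, ← sum_sub_distrib]
  refine sum_le_sum fun n _ => ?_
  linarith [mul_log_le_half_add (hz n) (hq n)]

lemma le_bregD_of_two_lt {L : ℕ} (hL : 2 < L) {z q : Fin N → ℝ} (hz : ∀ n, 0 ≤ z n)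
    (hq : ∀ n, 0 ≤ q n) :
    bregF L z + (∑ n, q n) ^ (2 / L : ℝ) / 2 ≤ bregD L z q := by
  have hL' : (2 : ℝ) < L := by exact_mod_cast hL
  rw [bregD_eq_of_two_lt hL z hq, add_le_add_iff_left]
  calc (∑ n, q n) ^ (2 / L : ℝ) / 2 ≤ (∑ n, q n ^ (2 / L : ℝ)) / 2 := by
        gcongr
        exact rpow_sum_le_sum_rpow _ (fun n _ => hq n) (by positivity)
          ((div_le_one (by positivity)).2 hL'.le)
    _ ≤ _ := by
      rw [sum_div]
      refine sum_le_sum fun n _ => (le_sub_self_iff _).2 ?_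
      exact div_nonpos_of_nonneg_of_nonpos (mul_nonneg (rpow_nonneg (hq n) _) (hz n)) (by linarith)

theorem tendsto_bregD_atTop {α : Type*} {l : Filter α} {L : ℕ} (hL : 2 ≤ L)
    {z : Fin N → ℝ} (hz : ∀ n, 0 ≤ z n) {q : α → Fin N → ℝ} (hq : ∀ᶠ t in l, ∀ n, 0 ≤ q t n)
    (hsum : Tendsto (fun t => ∑ n, q t n) l atTop) :
    Tendsto (fun t => bregD L z (q t)) l atTop := by
  rcases hL.eq_or_lt with rfl | hL
  · refine tendsto_atTop_mono' l (hq.mono fun t ht => le_bregD_two hz ht) ?_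
    exact tendsto_atTop_add_const_right _ _
      (tendsto_atTop_add_const_left _ _ (hsum.atTop_div_const (by norm_num)))
  · refine tendsto_atTop_mono' l (hq.mono fun t ht => le_bregD_of_two_lt hL hz ht) ?_
    exact tendsto_atTop_add_const_left _ _
      (((tendsto_rpow_atTop (by positivity)).comp hsum).atTop_div_const (by norm_num))

end Bregman

theorem stmt11_general {N : ℕ} (L : ℕ) (hL : 2 ≤ L)
    (z : Fin N → ℝ) (hz : ∀ i, 0 ≤ z i)
    (x : ℝ → Fin N → ℝ)
    (hnonneg : ∀ t : ℝ, 0 ≤ t → ∀ i, 0 ≤ x t i)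
    (hblow : Tendsto (fun t => Real.sqrt (∑ i, x t i ^ 2)) atTop atTop) :
    Tendsto (fun t => bregD L z (x t)) atTop atTop := by
  have hx : ∀ᶠ t in atTop, ∀ i, 0 ≤ x t i := eventually_ge_atTop 0 |>.mono hnonneg
  refine tendsto_bregD_atTop hL hz hx (tendsto_atTop_mono' _ ?_ hblow)
  exact hx.mono fun t ht => sqrt_sum_sq_le_sum _ fun i _ => ht i

theorem stmt11 {N : ℕ} (L : ℕ) (hL : 2 ≤ L)
    (z : Fin N → ℝ) (hz : ∀ i, 0 ≤ z i)
    (x : ℝ → Fin N → ℝ)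
    (hcont : ContinuousOn x (Set.Ici 0))
    (hnonneg : ∀ t : ℝ, 0 ≤ t → ∀ i, 0 ≤ x t i)
    (hpos0 : ∀ i, 0 < x 0 i)
    (hblow : Tendsto (fun t => Real.sqrt (∑ i, x t i ^ 2)) atTop atTop) :
    Tendsto (fun t => bregD L z (x t)) atTop atTop :=
  stmt11_general L hL z hz x hnonneg hblow
end
end

section
/- Let L ≥ 2 be an integer, A ∈ ℝ^{M×N}, y ∈ ℝ^M, and let x : [0,∞) → ℝ^N be differentiable, satisfy the reduced gradient flow x'(t) = −[Aᵀ(A x(t)^{⊙L} − y)] ⊙ x(t)^{⊙(L−1)} for all t ≥ 0, and have x(t) entrywise strictly positive. Write x̃(t) := x(t)^{⊙L}. Then for every z ∈ ℝ^N with z ≥ 0 and every t ≥ 0, the function t ↦ D_F(z, x̃(t)) is differentiable with d/dt D_F(z, x̃(t)) = −⟨A x̃(t) − y, A x̃(t) − A z⟩, where F and D_F are as defined below. -/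
open Filter Topology Matrix

noncomputable section

/-!
Coordinatewise, `D_F(z, q) = ∑ₙ φ(zₙ) − φ(qₙ) − φ'(qₙ)(zₙ − qₙ)`. Along any curve `q(s)` the terms
`φ'(q) q'` cancel, so `d/ds D_F(z, q) = −∑ₙ (φ'(qₙ))' (zₙ − qₙ)`. For `q = x^{⊙L}` the reduced flow is
mirror descent for `F`: as `φ''(u) = u^{2/L−2}/L` and `(x^L)' = L x^{L−1} x'`, the flow equation
gives `(φ'(xₙ^L))' = −(Aᵀ(A x̃ − y))ₙ`. Hence the derivative is `−⟨Aᵀ(A x̃ − y), z − x̃⟩`, that is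
`−⟨A x̃ − y, A x̃ − A z⟩`.
-/

def bregPhi (L : ℕ) (u : ℝ) : ℝ :=
  if L = 2 then (1 / 2) * (u * Real.log u - u)
  else ((L : ℝ) / (2 * (2 - (L : ℝ)))) * u ^ ((2 : ℝ) / (L : ℝ))

def bregPhiDeriv (L : ℕ) (u : ℝ) : ℝ :=
  if L = 2 then (1 / 2) * Real.log u
  else u ^ (((2 : ℝ) - (L : ℝ)) / (L : ℝ)) / (2 - (L : ℝ))

theorem bregD_eq_sum {N : ℕ} (L : ℕ) (p q : Fin N → ℝ) :
    bregD L p q =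
      ∑ n, (bregPhi L (p n) - bregPhi L (q n) - bregPhiDeriv L (q n) * (p n - q n)) := by
  have hF : ∀ v : Fin N → ℝ, bregF L v = ∑ n, bregPhi L (v n) := fun v => by
    unfold bregF bregPhi
    split_ifs <;> rw [Finset.mul_sum]
  simp only [bregD, hF, Finset.sum_sub_distrib]
  rfl

theorem hasDerivAt_bregPhi {L : ℕ} (hL : L ≠ 0) {u : ℝ} (hu : 0 < u) :
    HasDerivAt (bregPhi L) (bregPhiDeriv L u) u := by
  unfold bregPhi bregPhiDeriv
  split_ifs
  · exact (((Real.hasDerivAt_mul_log hu.ne').sub (hasDerivAt_id u)).const_mul _).congr_deriv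
      (by simp)
  · have hL0 : (L : ℝ) ≠ 0 := Nat.cast_ne_zero.mpr hL
    refine ((Real.hasDerivAt_rpow_const (Or.inl hu.ne')).const_mul _).congr_deriv ?_
    rw [show (2 : ℝ) / L - 1 = (2 - L) / L by field_simp]
    field_simp

theorem hasDerivAt_bregPhiDeriv {L : ℕ} (hL : L ≠ 0) {u : ℝ} (hu : 0 < u) :
    HasDerivAt (bregPhiDeriv L) (u ^ ((2 : ℝ) / L - 2) / L) u := by
  unfold bregPhiDeriv
  split_ifs with h2
  · subst h2
    refine ((Real.hasDerivAt_log hu.ne').const_mul _).congr_deriv ?_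
    norm_num [Real.rpow_neg_one, div_eq_inv_mul]
  · have hL0 : (L : ℝ) ≠ 0 := Nat.cast_ne_zero.mpr hL
    have h2L : (2 : ℝ) - L ≠ 0 := sub_ne_zero.mpr (by exact_mod_cast (Ne.symm h2))
    refine ((Real.hasDerivAt_rpow_const (Or.inl hu.ne')).div_const _).congr_deriv ?_
    rw [show (2 - L : ℝ) / L - 1 = 2 / L - 2 by field_simp; ring]
    field_simp

theorem HasDerivAt.bregman_sub {φ ψ f : ℝ → ℝ} {f' w z t : ℝ}
    (hφ : HasDerivAt φ (ψ (f t)) (f t)) (hf : HasDerivAt f f' t)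
    (hψf : HasDerivAt (fun s => ψ (f s)) w t) :
    HasDerivAt (fun s => φ z - φ (f s) - ψ (f s) * (z - f s)) (-w * (z - f t)) t :=
  (((hasDerivAt_const t (φ z)).sub (hφ.comp t hf)).sub
    (hψf.mul ((hasDerivAt_const t z).sub hf))).congr_deriv (by simp only [Pi.sub_apply]; ring)

theorem pow_rpow_two_div_sub_two_mul_pow_mul_pow {L : ℕ} (hL : 1 ≤ L) {u : ℝ} (hu : 0 < u) :
    (u ^ L) ^ ((2 : ℝ) / L - 2) * (u ^ (L - 1) * u ^ (L - 1)) = 1 := by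
  rw [← Real.rpow_natCast u L, ← Real.rpow_natCast u (L - 1), ← Real.rpow_mul hu.le,
    ← Real.rpow_add hu, ← Real.rpow_add hu, Nat.cast_sub hL, Nat.cast_one]
  convert Real.rpow_zero u using 2
  field_simp
  ring

theorem hasDerivAt_bregPhiDeriv_pow {L : ℕ} (hL : 1 ≤ L) {x : ℝ → ℝ} {g t : ℝ}
    (hx : HasDerivAt x (-(g * x t ^ (L - 1))) t) (hpos : 0 < x t) :
    HasDerivAt (fun s => bregPhiDeriv L (x s ^ L)) (-g) t := by
  refine ((hasDerivAt_bregPhiDeriv (Nat.one_le_iff_ne_zero.mp hL) (pow_pos hpos L)).comp t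
    (hx.pow L)).congr_deriv ?_
  have key := pow_rpow_two_div_sub_two_mul_pow_mul_pow hL hpos
  generalize (x t ^ L) ^ ((2 : ℝ) / L - 2) = P at key ⊢
  field_simp
  linear_combination (-g) * key

theorem stmt13_general {M N : ℕ} (L : ℕ) (hL : 2 ≤ L)
    (A : Matrix (Fin M) (Fin N) ℝ) (y : Fin M → ℝ)
    (x : ℝ → Fin N → ℝ)
    (hflow : GradFlow A y L x)
    (hpos : ∀ t : ℝ, 0 ≤ t → ∀ i, 0 < x t i)
    (z : Fin N → ℝ)
    (t : ℝ) (ht : 0 ≤ t) :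
    HasDerivAt (fun s => bregD L z (fun i => x s i ^ L))
      (-(∑ j, (A.mulVec (fun i => x t i ^ L) j - y j) *
          (A.mulVec (fun i => x t i ^ L) j - A.mulVec z j))) t := by
  set q : Fin N → ℝ := fun i => x t i ^ L
  set g : Fin N → ℝ := Aᵀ *ᵥ (A *ᵥ q - y)
  have hcoord : ∀ n, HasDerivAt (fun s => bregPhi L (z n) - bregPhi L (x s n ^ L) -
      bregPhiDeriv L (x s n ^ L) * (z n - x s n ^ L)) (-(-g n) * (z n - q n)) t := fun n =>
    have hxn := hpos t ht n
    HasDerivAt.bregman_sub (hasDerivAt_bregPhi (by omega) (pow_pos hxn L))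
      ((hflow t ht n).pow L) (hasDerivAt_bregPhiDeriv_pow (by omega) (hflow t ht n) hxn)
  have hadjoint : ∑ n, -(-g n) * (z n - q n) = -((A *ᵥ q - y) ⬝ᵥ (A *ᵥ q - A *ᵥ z)) :=
    calc ∑ n, -(-g n) * (z n - q n)
        = ((A *ᵥ q - y) ᵥ* A) ⬝ᵥ (z - q) := by simp [g, mulVec_transpose, dotProduct]
      _ = (A *ᵥ q - y) ⬝ᵥ (A *ᵥ z - A *ᵥ q) := by rw [← dotProduct_mulVec, mulVec_sub]
      _ = -((A *ᵥ q - y) ⬝ᵥ (A *ᵥ q - A *ᵥ z)) := by rw [← dotProduct_neg, neg_sub]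
  simp only [bregD_eq_sum]
  exact (HasDerivAt.fun_sum fun n _ => hcoord n).congr_deriv hadjoint

theorem stmt13 {M N : ℕ} (L : ℕ) (hL : 2 ≤ L)
    (A : Matrix (Fin M) (Fin N) ℝ) (y : Fin M → ℝ)
    (x : ℝ → Fin N → ℝ)
    (hflow : GradFlow A y L x)
    (hpos : ∀ t : ℝ, 0 ≤ t → ∀ i, 0 < x t i)
    (z : Fin N → ℝ) (hz : ∀ i, 0 ≤ z i)
    (t : ℝ) (ht : 0 ≤ t) :
    HasDerivAt (fun s => bregD L z (fun i => x s i ^ L))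
      (-(∑ j, (A.mulVec (fun i => x t i ^ L) j - y j) *
          (A.mulVec (fun i => x t i ^ L) j - A.mulVec z j))) t :=
  stmt13_general L hL A y x hflow hpos z t ht
end
end

section
/- Let L ≥ 2 be an integer, A ∈ ℝ^{M×N}, y ∈ ℝ^M, and let x : [0,∞) → ℝ^N be differentiable and satisfy the reduced gradient flow x'(t) = −[Aᵀ(A x(t)^{⊙L} − y)] ⊙ x(t)^{⊙(L−1)} for all t ≥ 0. If x(0) ≥ 0 entrywise, then x(t) ≥ 0 entrywise for all t ≥ 0. -/
open Filter Topology Matrix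

noncomputable section

/-!
Each coordinate of the flow solves a scalar linear equation `xᵢ' = cᵢ(t) xᵢ` with the continuous
coefficient `cᵢ = -[Aᵀ(A x^{⊙L} - y)]ᵢ xᵢ^{L-2}`, so `xᵢ(t) = xᵢ(0) exp (∫₀ᵗ cᵢ)` keeps the sign of `xᵢ(0)`.
-/

theorem eq_mul_exp_integral_of_hasDerivAt_mul_self {f c : ℝ → ℝ}
    (hc : ContinuousOn c (Set.Ici 0)) (hf : ∀ s, 0 ≤ s → HasDerivAt f (c s * f s) s)
    {t : ℝ} (ht : 0 ≤ t) : f t = f 0 * Real.exp (∫ s in (0 : ℝ)..t, c s) := by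
  -- extend `c` continuously to all of `ℝ`, so that the fundamental theorem of calculus applies at `0`
  set g : ℝ → ℝ := fun s => c (max s 0)
  have hg : Continuous g :=
    hc.comp_continuous (continuous_id.max continuous_const) fun s => le_max_right s 0
  have hgc : ∀ s, 0 ≤ s → g s = c s := fun s hs => by simp only [g, max_eq_left hs]
  set C : ℝ → ℝ := fun u => ∫ s in (0 : ℝ)..u, g s
  have hC : ∀ u, HasDerivAt C (g u) u := fun u => hg.integral_hasStrictDerivAt 0 u |>.hasDerivAt
  set F : ℝ → ℝ := fun u => f u * Real.exp (-C u)
  have hF : ∀ s, 0 ≤ s → HasDerivAt F 0 s := by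
    intro s hs
    refine ((hf s hs).mul (hC s).neg.exp).congr_deriv ?_
    rw [hgc s hs]
    ring
  have hFt : F t = F 0 := constant_of_has_deriv_right_zero
    (fun s hs => (hF s hs.1).continuousAt.continuousWithinAt)
    (fun s hs => (hF s hs.1).hasDerivWithinAt) t ⟨ht, le_rfl⟩
  have hCt : C t = ∫ s in (0 : ℝ)..t, c s :=
    intervalIntegral.integral_congr fun s hs => hgc s (by
      rw [Set.uIcc_of_le ht] at hs
      exact hs.1)
  simp only [F, C, intervalIntegral.integral_same, neg_zero, Real.exp_zero, mul_one] at hFt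
  rw [← hCt, ← hFt, mul_assoc, ← Real.exp_add, neg_add_cancel, Real.exp_zero, mul_one]

theorem nonneg_of_hasDerivAt_mul_self {f c : ℝ → ℝ}
    (hc : ContinuousOn c (Set.Ici 0)) (hf : ∀ s, 0 ≤ s → HasDerivAt f (c s * f s) s)
    (h0 : 0 ≤ f 0) {t : ℝ} (ht : 0 ≤ t) : 0 ≤ f t := by
  rw [eq_mul_exp_integral_of_hasDerivAt_mul_self hc hf ht]
  exact mul_nonneg h0 (Real.exp_pos _).le

namespace GradFlow

variable {M N : ℕ} {A : Matrix (Fin M) (Fin N) ℝ} {y : Fin M → ℝ} {L : ℕ} {x : ℝ → Fin N → ℝ}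

theorem continuousOn_s15 (hflow : GradFlow A y L x) : ContinuousOn x (Set.Ici 0) := fun s hs =>
  (continuousAt_pi.2 fun j => (hflow s hs j).continuousAt).continuousWithinAt

theorem hasDerivAt_coord_eq_mul_self (hflow : GradFlow A y L x) (hL : 2 ≤ L) {s : ℝ}
    (hs : 0 ≤ s) (i : Fin N) :
    HasDerivAt (fun u => x u i)
      (-(Aᵀ *ᵥ (A *ᵥ (fun j => x s j ^ L) - y)) i * x s i ^ (L - 2) * x s i) s := by
  convert hflow s hs i using 1
  rw [mul_assoc, ← pow_succ, show L - 2 + 1 = L - 1 by omega, neg_mul]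

end GradFlow

theorem stmt15 {M N : ℕ} (L : ℕ) (hL : 2 ≤ L)
    (A : Matrix (Fin M) (Fin N) ℝ) (y : Fin M → ℝ)
    (x : ℝ → Fin N → ℝ)
    (hflow : GradFlow A y L x)
    (h0 : ∀ i, 0 ≤ x 0 i) :
    ∀ t : ℝ, 0 ≤ t → ∀ i, 0 ≤ x t i := by
  intro t ht i
  have hcoeff : Continuous fun v : Fin N → ℝ =>
      -(Aᵀ *ᵥ (A *ᵥ (fun j => v j ^ L) - y)) i * v i ^ (L - 2) := by
    simp only [Matrix.mulVec, dotProduct, Pi.sub_apply]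
    fun_prop
  exact nonneg_of_hasDerivAt_mul_self (hcoeff.comp_continuousOn hflow.continuousOn_s15)
    (fun s hs => hflow.hasDerivAt_coord_eq_mul_self hL hs i) (h0 i) ht
end
end

section
/- Let L ≥ 2 be an integer, A ∈ ℝ^{M×N}, y ∈ ℝ^M. If x₊ ∈ ℝ^N with x₊ ≥ 0 minimizes ‖Az − y‖₂² over all entrywise-nonnegative z ∈ ℝ^N, then the point x^{(1)} = ⋯ = x^{(L)} = x₊^{⊙(1/L)} (entrywise L-th root of x₊) is a stationary point of the overparameterized loss L_over(x^{(1)},…,x^{(L)}) = ½‖A(x^{(1)} ⊙ ⋯ ⊙ x^{(L)}) − y‖₂²; that is, for every ℓ ∈ [L], [Aᵀ(A x₊ − y)] ⊙ x₊^{⊙((L−1)/L)} = 0, so the gradient of L_over with respect to each factor vanishes there. -/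
open Matrix

noncomputable section

theorem stmt17 {M N : ℕ} (L : ℕ) (hL : 2 ≤ L)
    (A : Matrix (Fin M) (Fin N) ℝ) (y : Fin M → ℝ)
    (xp : Fin N → ℝ) (hxp : ∀ i, 0 ≤ xp i)
    (hmin : ∀ z : Fin N → ℝ, (∀ i, 0 ≤ z i) →
      ∑ j, (A.mulVec xp j - y j) ^ 2 ≤ ∑ j, (A.mulVec z j - y j) ^ 2) :
    ∀ i : Fin N,
      Matrix.mulVec Aᵀ (A.mulVec xp - y) i * xp i ^ (((L : ℝ) - 1) / (L : ℝ)) = 0 := by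
  intro i
  rcases eq_or_lt_of_le (hxp i) with h0 | hpos
  · have he : (((L : ℝ) - 1) / (L : ℝ)) ≠ 0 := by
      have hL' : (2 : ℝ) ≤ (L : ℝ) := by exact_mod_cast hL
      have : (0:ℝ) < ((L : ℝ) - 1) / (L : ℝ) := div_pos (by linarith) (by linarith)
      linarith
    rw [← h0, Real.zero_rpow he, mul_zero]
  · -- interior coordinate: gradient vanishes
    set r : Fin M → ℝ := fun j => A.mulVec xp j - y j with hr
    set g : ℝ := ∑ j, A j i * r j with hgdef
    set c : ℝ := ∑ j, (A j i) ^ 2 with hcdef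
    have hc0 : 0 ≤ c := Finset.sum_nonneg fun j _ => sq_nonneg _
    have hq : ∀ t : ℝ, |t| ≤ xp i → 0 ≤ 2 * t * g + t ^ 2 * c := by
      intro t ht
      have hznn : ∀ k, 0 ≤ (xp + t • (Pi.single i 1 : Fin N → ℝ)) k := by
        intro k
        by_cases hk : k = i
        · subst hk
          simp only [Pi.add_apply, Pi.smul_apply, Pi.single_eq_same, smul_eq_mul, mul_one]
          have := abs_le.mp ht
          linarith
        · simp [Pi.single_eq_of_ne hk, hxp k]
      have hmv : ∀ j, A.mulVec (xp + t • (Pi.single i 1 : Fin N → ℝ)) j = A.mulVec xp j + t * A j i := by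
        intro j
        simp [Matrix.mulVec_add, Matrix.mulVec_smul, Matrix.mulVec_single]
      have h := hmin _ hznn
      have hexp : ∑ j, (A.mulVec (xp + t • (Pi.single i 1 : Fin N → ℝ)) j - y j) ^ 2
          = ∑ j, r j ^ 2 + (2 * t * g + t ^ 2 * c) := by
        rw [hgdef, hcdef, Finset.mul_sum, Finset.mul_sum, ← Finset.sum_add_distrib,
          ← Finset.sum_add_distrib]
        refine Finset.sum_congr rfl fun j _ => ?_
        rw [hmv j]
        simp only [hr]
        ring
      rw [hexp] at h
      linarith
    have hg : g = 0 := by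
      by_contra hg
      have hgabs : 0 < |g| := abs_pos.mpr hg
      set s : ℝ := min (1 / (c + 1)) (xp i / |g|) with hs
      have hspos : 0 < s := lt_min (by positivity) (by positivity)
      have hsc : s * c < 2 := by
        have h1 : s ≤ 1 / (c + 1) := min_le_left _ _
        have h2 : s * c ≤ (1 / (c + 1)) * c := by
          exact mul_le_mul_of_nonneg_right h1 hc0
        have h3 : (1 / (c + 1)) * c ≤ 1 := by
          rw [div_mul_eq_mul_div, one_mul, div_le_one (by linarith)]
          linarith
        linarith
      have hts : |(-g * s)| ≤ xp i := by
        rw [abs_mul, abs_neg, abs_of_pos hspos]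
        have : s ≤ xp i / |g| := min_le_right _ _
        calc |g| * s ≤ |g| * (xp i / |g|) :=
              mul_le_mul_of_nonneg_left this (le_of_lt hgabs)
          _ = xp i := by field_simp
      have h := hq (-g * s) hts
      have hneg : 2 * (-g * s) * g + (-g * s) ^ 2 * c = g ^ 2 * s * (s * c - 2) := by ring
      rw [hneg] at h
      have hg2 : 0 < g ^ 2 * s := by positivity
      have h2 : 0 ≤ s * c - 2 := nonneg_of_mul_nonneg_right (by linarith [h]) hg2
      linarith
    have hT : Matrix.mulVec Aᵀ (A.mulVec xp - y) i = g := by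
      simp [Matrix.mulVec, dotProduct, Matrix.transpose_apply, hgdef, hr]
    rw [hT, hg, zero_mul]
end
end
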